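/- arXiv:2011.09678 — 5 statements merged into one kernel-verified Lean document; each statement's English description precedes it below -/
import Mathlib

section
/- Let H be a real Hilbert space, x₁, …, x_M points of a set X, φ : X → H a feature map, y ∈ ℝ^M, and λ > 0. Define the regularized empirical risk J(f) = (1/M)·∑_{i=1}^M (y_i − ⟪f, φ(x_i)⟫)² + λ·‖f‖² for f ∈ H, and let G be the Gram matrix G_{ij} = ⟪φ(x_i), φ(x_j)⟫. Then J has a unique minimizer over H, given by f* = ∑_{i=1}^M α_i φ(x_i) where α = (G + Mλ·I)⁻¹ y; that is, J(f*) ≤ J(f) for all f ∈ H, with equality only when f = f*. -/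
/-!
Write `f* = ∑ⱼ αⱼ φ(xⱼ)`. The linear system `(G + Mλ·I) α = y` says exactly that the residuals
of `f*` are `yᵢ - ⟪f*, φ(xᵢ)⟫ = Mλ αᵢ`. With this, the cross terms of `J(f* + g)` cancel
against `2λ⟪f*, g⟫`, leaving `J(f* + g) = J(f*) + (1/M) ∑ᵢ ⟪g, φ(xᵢ)⟫² + λ‖g‖²`.
-/

open scoped Matrix

open Matrix Finset

section

variable {H ι : Type*} [NormedAddCommGroup H] [InnerProductSpace ℝ H] [Fintype ι]

lemma inner_sum_smul_eq_gram_mulVec (v : ι → H) (α : ι → ℝ) (i : ι) :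
    inner ℝ (∑ j, α j • v j) (v i) = (gram ℝ v *ᵥ α) i := by
  simp only [sum_inner, real_inner_smul_left, mulVec, dotProduct, gram_apply]
  exact sum_congr rfl fun j _ => by rw [real_inner_comm, mul_comm]

lemma posDef_gram_add_smul_one [DecidableEq ι] (v : ι → H) {μ : ℝ} (hμ : 0 < μ) :
    (gram ℝ v + μ • (1 : Matrix ι ι ℝ)).PosDef :=
  PosDef.posSemidef_add (posSemidef_gram ℝ v) (PosDef.one.smul hμ)

lemma gram_add_smul_one_residual [DecidableEq ι] (v : ι → H) {μ : ℝ} (hμ : 0 < μ) (y : ι → ℝ)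
    (i : ι) :
    y i - inner ℝ (∑ j, ((gram ℝ v + μ • 1)⁻¹ *ᵥ y) j • v j) (v i)
      = μ * ((gram ℝ v + μ • 1)⁻¹ *ᵥ y) i := by
  set α := (gram ℝ v + μ • 1)⁻¹ *ᵥ y
  have hsolve : (gram ℝ v + μ • 1) *ᵥ α = y := by
    rw [mulVec_mulVec, mul_nonsing_inv _ (posDef_gram_add_smul_one v hμ).det_pos.ne'.isUnit,
      one_mulVec]
  have hi := congrFun hsolve i
  simp only [add_mulVec, smul_mulVec, one_mulVec, Pi.add_apply, Pi.smul_apply,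
    smul_eq_mul] at hi
  rw [inner_sum_smul_eq_gram_mulVec]
  linarith

noncomputable def regularizedRisk (v : ι → H) (y : ι → ℝ) (c lam : ℝ) (f : H) : ℝ :=
  c * ∑ i, (y i - inner ℝ f (v i)) ^ 2 + lam * ‖f‖ ^ 2

variable {v : ι → H} {y : ι → ℝ} {c lam : ℝ} {α : ι → ℝ}

lemma regularizedRisk_eq_add_of_residual
    (hres : ∀ i, c * (y i - inner ℝ (∑ j, α j • v j) (v i)) = lam * α i) (f : H) :
    regularizedRisk v y c lam f = regularizedRisk v y c lam (∑ j, α j • v j)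
      + c * ∑ i, inner ℝ (f - ∑ j, α j • v j) (v i) ^ 2 + lam * ‖f - ∑ j, α j • v j‖ ^ 2 := by
  set fs := ∑ j, α j • v j
  set g := f - fs
  have hf : f = fs + g := by simp [g]
  have hcross : inner ℝ fs g = ∑ i, α i * inner ℝ g (v i) := by
    simp only [fs, sum_inner, real_inner_smul_left, real_inner_comm]
  have hcancel :
      c * ∑ i, (y i - inner ℝ fs (v i)) * inner ℝ g (v i) = lam * inner ℝ fs g := by
    rw [hcross, mul_sum, mul_sum]
    refine sum_congr rfl fun i _ => ?_
    rw [← mul_assoc, hres i, mul_assoc]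
  have hexpand : ∑ i, (y i - inner ℝ f (v i)) ^ 2 = ∑ i, (y i - inner ℝ fs (v i)) ^ 2
      - 2 * ∑ i, (y i - inner ℝ fs (v i)) * inner ℝ g (v i) + ∑ i, inner ℝ g (v i) ^ 2 := by
    rw [mul_sum, ← sum_sub_distrib, ← sum_add_distrib]
    refine sum_congr rfl fun i _ => ?_
    rw [hf, inner_add_left]
    ring
  rw [regularizedRisk, regularizedRisk, hexpand, hf, norm_add_sq_real]
  linear_combination (-2) * hcancel

lemma regularizedRisk_le_of_residual (hc : 0 ≤ c) (hlam : 0 ≤ lam)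
    (hres : ∀ i, c * (y i - inner ℝ (∑ j, α j • v j) (v i)) = lam * α i) (f : H) :
    regularizedRisk v y c lam (∑ j, α j • v j) ≤ regularizedRisk v y c lam f := by
  rw [regularizedRisk_eq_add_of_residual hres f]
  have : 0 ≤ c * ∑ i, inner ℝ (f - ∑ j, α j • v j) (v i) ^ 2 := by positivity
  have : 0 ≤ lam * ‖f - ∑ j, α j • v j‖ ^ 2 := by positivity
  linarith

lemma eq_of_regularizedRisk_eq_of_residual (hc : 0 ≤ c) (hlam : 0 < lam)
    (hres : ∀ i, c * (y i - inner ℝ (∑ j, α j • v j) (v i)) = lam * α i) {f : H}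
    (hf : regularizedRisk v y c lam f = regularizedRisk v y c lam (∑ j, α j • v j)) :
    f = ∑ j, α j • v j := by
  rw [regularizedRisk_eq_add_of_residual hres f] at hf
  have : 0 ≤ c * ∑ i, inner ℝ (f - ∑ j, α j • v j) (v i) ^ 2 := by positivity
  have : lam * ‖f - ∑ j, α j • v j‖ ^ 2 = 0 := by nlinarith [sq_nonneg ‖f - ∑ j, α j • v j‖]
  simpa [hlam.ne', sub_eq_zero] using this

end

theorem regularized_least_squares_unique_minimizer_general
    {H X : Type*} [NormedAddCommGroup H] [InnerProductSpace ℝ H]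
    {M : ℕ} (hM : 0 < M) (x : Fin M → X) (φ : X → H) (y : Fin M → ℝ)
    (lam : ℝ) (hlam : 0 < lam)
    (J : H → ℝ)
    (hJ : ∀ f : H, J f =
      (1 / (M : ℝ)) * ∑ i, (y i - inner ℝ f (φ (x i))) ^ 2 + lam * ‖f‖ ^ 2)
    (G : Matrix (Fin M) (Fin M) ℝ) (hG : ∀ i j, G i j = inner ℝ (φ (x i)) (φ (x j)))
    (α : Fin M → ℝ)
    (hα : α = (G + ((M : ℝ) * lam) • (1 : Matrix (Fin M) (Fin M) ℝ))⁻¹.mulVec y)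
    (fstar : H) (hf : fstar = ∑ i, α i • φ (x i)) :
    (∀ f : H, J fstar ≤ J f) ∧ (∀ f : H, J f = J fstar → f = fstar) := by
  have hMR : (0 : ℝ) < M := by exact_mod_cast hM
  obtain rfl : G = gram ℝ (φ ∘ x) := Matrix.ext hG
  obtain rfl : J = regularizedRisk (φ ∘ x) y (1 / M) lam := funext hJ
  subst hf
  have hres (i : Fin M) :
      1 / (M : ℝ) * (y i - inner ℝ (∑ j, α j • φ (x j)) (φ (x i))) = lam * α i := by
    have h := gram_add_smul_one_residual (φ ∘ x) (mul_pos hMR hlam) y i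
    simp only [Function.comp_apply, ← hα] at h
    rw [h]
    field_simp
  exact ⟨regularizedRisk_le_of_residual (by positivity) hlam.le hres,
    fun f => eq_of_regularizedRisk_eq_of_residual (by positivity) hlam hres⟩

/-- The regularized empirical risk `J(f) = (1/M) ∑ᵢ (yᵢ - ⟪f, φ(xᵢ)⟫)² + λ‖f‖²` has a
unique minimizer over `H`, namely `f* = ∑ᵢ αᵢ φ(xᵢ)` with `α = (G + Mλ·I)⁻¹ y`. -/
theorem regularized_least_squares_unique_minimizer
    {H X : Type*} [NormedAddCommGroup H] [InnerProductSpace ℝ H] [CompleteSpace H]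
    {M : ℕ} (hM : 0 < M) (x : Fin M → X) (φ : X → H) (y : Fin M → ℝ)
    (lam : ℝ) (hlam : 0 < lam)
    (J : H → ℝ)
    (hJ : ∀ f : H, J f =
      (1 / (M : ℝ)) * ∑ i, (y i - inner ℝ f (φ (x i))) ^ 2 + lam * ‖f‖ ^ 2)
    (G : Matrix (Fin M) (Fin M) ℝ) (hG : ∀ i j, G i j = inner ℝ (φ (x i)) (φ (x j)))
    (α : Fin M → ℝ)
    (hα : α = (G + ((M : ℝ) * lam) • (1 : Matrix (Fin M) (Fin M) ℝ))⁻¹.mulVec y)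
    (fstar : H) (hf : fstar = ∑ i, α i • φ (x i)) :
    (∀ f : H, J fstar ≤ J f) ∧ (∀ f : H, J f = J fstar → f = fstar) :=
  regularized_least_squares_unique_minimizer_general hM x φ y lam hlam J hJ G hG α hα fstar hf
end

section
/- Let H be a real Hilbert space, x₁, …, x_M points of a set X, φ : X → H a feature map with Gram matrix G_{ij} = ⟪φ(x_i), φ(x_j)⟫, and λ > 0. Fix x ∈ X, let Φ ∈ ℝ^M have entries Φ_i = ⟪φ(x_i), φ x⟫, and let f* ∈ H be the unique minimizer over H of J(f) = (1/M)·∑_{i=1}^M (⟪φ(x_i), φ x⟫ − ⟪f, φ(x_i)⟫)² + λ·‖f‖². Then the empirical classifier value satisfies ⟪f*, φ x⟫ = Φᵀ (G + Mλ·I)⁻¹ Φ. -/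
open scoped Matrix InnerProductSpace

/-!
The objective is quadratic, so `J (f + h) = J f + (linear in h) + (nonnegative quadratic in h)`, and
any `f` with vanishing gradient is a global minimizer. Solving `(G + Mλ·I) α = Φ` and putting
`f = ∑ αᵢ φ(xᵢ)` makes the residuals `Φᵢ - ⟪f, φ(xᵢ)⟫` equal to `Mλ·αᵢ`, which is exactly the
vanishing of the gradient. By uniqueness `f* = f`, so `⟪f*, φ x⟫ = ∑ αᵢ Φᵢ = Φᵀ (G + Mλ·I)⁻¹ Φ`.
-/

section RidgeObjective

variable {H ι : Type*} [NormedAddCommGroup H] [InnerProductSpace ℝ H] [Fintype ι]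

noncomputable def ridgeObjective (v : ι → H) (y : ι → ℝ) (c lam : ℝ) (f : H) : ℝ :=
  c * ∑ i, (y i - ⟪f, v i⟫_ℝ) ^ 2 + lam * ‖f‖ ^ 2

variable (v : ι → H) (y : ι → ℝ) (c lam : ℝ)

theorem ridgeObjective_add (f h : H) :
    ridgeObjective v y c lam (f + h) =
      ridgeObjective v y c lam f
        - 2 * ⟪c • ∑ i, (y i - ⟪f, v i⟫_ℝ) • v i - lam • f, h⟫_ℝ
        + (c * ∑ i, ⟪h, v i⟫_ℝ ^ 2 + lam * ‖h‖ ^ 2) := by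
  have hsq : ∀ i, (y i - ⟪f + h, v i⟫_ℝ) ^ 2 =
      (y i - ⟪f, v i⟫_ℝ) ^ 2 - 2 * ((y i - ⟪f, v i⟫_ℝ) * ⟪v i, h⟫_ℝ) + ⟪h, v i⟫_ℝ ^ 2 := by
    intro i
    rw [inner_add_left, real_inner_comm h]
    ring
  simp only [ridgeObjective, hsq, Finset.sum_add_distrib, Finset.sum_sub_distrib,
    ← Finset.mul_sum, norm_add_sq_real, inner_sub_left, real_inner_smul_left, sum_inner]
  ring

theorem ridgeObjective_le_of_gradient_eq_zero (hc : 0 ≤ c) (hlam : 0 ≤ lam) {f : H}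
    (hf : c • ∑ i, (y i - ⟪f, v i⟫_ℝ) • v i = lam • f) (g : H) :
    ridgeObjective v y c lam f ≤ ridgeObjective v y c lam g := by
  have hexpand := ridgeObjective_add v y c lam f (g - f)
  rw [add_sub_cancel, hf, sub_self, inner_zero_left] at hexpand
  have hquad : 0 ≤ c * ∑ i, ⟪g - f, v i⟫_ℝ ^ 2 + lam * ‖g - f‖ ^ 2 := by positivity
  linarith

variable {v y c lam}

theorem sub_inner_sum_smul_eq_of_mulVec_eq {s : ℝ} {α : ι → ℝ} [DecidableEq ι]
    (hα : (Matrix.gram ℝ v + s • 1) *ᵥ α = y) (i : ι) :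
    y i - ⟪∑ j, α j • v j, v i⟫_ℝ = s * α i := by
  have hgram : ⟪∑ j, α j • v j, v i⟫_ℝ = (Matrix.gram ℝ v *ᵥ α) i := by
    simp only [sum_inner, real_inner_smul_left, Matrix.mulVec, dotProduct, Matrix.gram_apply]
    exact Finset.sum_congr rfl fun j _ => by rw [real_inner_comm, mul_comm]
  have hi := congrFun hα i
  rw [Matrix.add_mulVec, Matrix.smul_mulVec, Matrix.one_mulVec] at hi
  simp only [Pi.add_apply, Pi.smul_apply, smul_eq_mul] at hi
  linarith

theorem ridgeObjective_sum_smul_le (hc : 0 ≤ c) (hlam : 0 ≤ lam) {s : ℝ} (hcs : c * s = lam)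
    {α : ι → ℝ} [DecidableEq ι] (hα : (Matrix.gram ℝ v + s • 1) *ᵥ α = y) (g : H) :
    ridgeObjective v y c lam (∑ i, α i • v i) ≤ ridgeObjective v y c lam g := by
  refine ridgeObjective_le_of_gradient_eq_zero v y c lam hc hlam ?_ g
  simp only [sub_inner_sum_smul_eq_of_mulVec_eq hα, Finset.smul_sum, smul_smul, ← hcs, mul_assoc]

end RidgeObjective

theorem empirical_classifier_value_general
    {H X : Type*} [NormedAddCommGroup H] [InnerProductSpace ℝ H]
    {M : ℕ} (hM : 0 < M) (x : Fin M → X) (φ : X → H)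
    (lam : ℝ) (hlam : 0 < lam)
    (G : Matrix (Fin M) (Fin M) ℝ) (hG : ∀ i j, G i j = inner ℝ (φ (x i)) (φ (x j)))
    (xq : X)
    (Φ : Fin M → ℝ) (hΦ : ∀ i, Φ i = inner ℝ (φ (x i)) (φ xq))
    (J : H → ℝ)
    (hJ : ∀ f : H, J f =
      (1 / (M : ℝ)) * ∑ i, ((inner ℝ (φ (x i)) (φ xq) : ℝ) - inner ℝ f (φ (x i))) ^ 2
        + lam * ‖f‖ ^ 2)
    (fstar : H)
    (huniq : ∀ f : H, (∀ g : H, J f ≤ J g) → f = fstar) :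
    (inner ℝ fstar (φ xq) : ℝ) =
      Φ ⬝ᵥ (G + ((M : ℝ) * lam) • (1 : Matrix (Fin M) (Fin M) ℝ))⁻¹.mulVec Φ := by
  obtain rfl : G = Matrix.gram ℝ (φ ∘ x) := Matrix.ext hG
  set A := Matrix.gram ℝ (φ ∘ x) + ((M : ℝ) * lam) • (1 : Matrix (Fin M) (Fin M) ℝ)
  have hA : A.PosDef := Matrix.PosDef.posSemidef_add (Matrix.posSemidef_gram ℝ _)
    (Matrix.PosDef.one.smul (by positivity))
  set α := A⁻¹ *ᵥ Φ
  have hα : A *ᵥ α = Φ := by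
    rw [Matrix.mulVec_mulVec, Matrix.mul_nonsing_inv _ ((A.isUnit_iff_isUnit_det).mp hA.isUnit),
      Matrix.one_mulVec]
  have hJ_eq : J = ridgeObjective (φ ∘ x) Φ (1 / M) lam := funext fun f => by
    simp only [hJ, ridgeObjective, hΦ, Function.comp_apply]
  have hcs : 1 / (M : ℝ) * (M * lam) = lam := by field_simp
  have hf_min := ridgeObjective_sum_smul_le (by positivity) hlam.le hcs hα
  rw [← huniq _ (hJ_eq ▸ hf_min), sum_inner, dotProduct]
  simp only [real_inner_smul_left, Function.comp_apply, hΦ, mul_comm]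

/-- The empirical classifier value of the unique minimizer `f*` of the regularized
least-squares problem satisfies `⟪f*, φ x⟫ = Φᵀ (G + Mλ·I)⁻¹ Φ`, where
`Φᵢ = ⟪φ(xᵢ), φ x⟫`. -/
theorem empirical_classifier_value
    {H X : Type*} [NormedAddCommGroup H] [InnerProductSpace ℝ H] [CompleteSpace H]
    {M : ℕ} (hM : 0 < M) (x : Fin M → X) (φ : X → H)
    (lam : ℝ) (hlam : 0 < lam)
    (G : Matrix (Fin M) (Fin M) ℝ) (hG : ∀ i j, G i j = inner ℝ (φ (x i)) (φ (x j)))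
    (xq : X)
    (Φ : Fin M → ℝ) (hΦ : ∀ i, Φ i = inner ℝ (φ (x i)) (φ xq))
    (J : H → ℝ)
    (hJ : ∀ f : H, J f =
      (1 / (M : ℝ)) * ∑ i, ((inner ℝ (φ (x i)) (φ xq) : ℝ) - inner ℝ f (φ (x i))) ^ 2
        + lam * ‖f‖ ^ 2)
    (fstar : H)
    (hmin : ∀ f : H, J fstar ≤ J f)
    (huniq : ∀ f : H, (∀ g : H, J f ≤ J g) → f = fstar) :
    (inner ℝ fstar (φ xq) : ℝ) =
      Φ ⬝ᵥ (G + ((M : ℝ) * lam) • (1 : Matrix (Fin M) (Fin M) ℝ))⁻¹.mulVec Φ :=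
  empirical_classifier_value_general hM x φ lam hlam G hG xq Φ hΦ J hJ fstar huniq
end

section
/- Let H be a real Hilbert space, x₁, …, x_M points of a set X, φ : X → H a feature map, y ∈ ℝ^M, and λ > 0. Define J(f) = (1/M)·∑_{i=1}^M (y_i − ⟪f, φ(x_i)⟫)² + λ·‖f‖² for f ∈ H. Then f ∈ H is a minimizer of J over H if and only if it satisfies the normal equation Mλ·f = ∑_{i=1}^M (y_i − ⟪f, φ(x_i)⟫)·φ(x_i). -/
/-!
`J` is a quadratic functional: `J (f + h) = J f + ⟪v, h⟫ + q h` with gradient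
`v = 2 • (λ • f - (1/M) • ∑ᵢ (yᵢ - ⟪f, φ xᵢ⟫) • φ xᵢ)` and a nonnegative, 2-homogeneous
remainder `q`. Hence `v = 0` makes `f` a minimizer, and conversely along the line `f + t • v`
the function `t ↦ t ‖v‖² + t² q v` must be nonnegative, which forces `‖v‖² = 0`.
-/

open scoped InnerProductSpace

section QuadraticExpansion

variable {E : Type*} [NormedAddCommGroup E] [InnerProductSpace ℝ E]

theorem forall_le_iff_eq_zero_of_map_add_eq {J q : E → ℝ} {f v : E}
    (hq_nonneg : ∀ h, 0 ≤ q h) (hq_smul : ∀ (t : ℝ) h, q (t • h) = t ^ 2 * q h)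
    (hJ : ∀ h, J (f + h) = J f + ⟪v, h⟫_ℝ + q h) :
    (∀ g, J f ≤ J g) ↔ v = 0 := by
  constructor
  · intro hmin
    have hline : ∀ t : ℝ, 0 ≤ q v * (t * t) + ‖v‖ ^ 2 * t + 0 := fun t => by
      have := hmin (f + t • v)
      rw [hJ, hq_smul, real_inner_smul_right, real_inner_self_eq_norm_sq] at this
      linarith
    have hdisc : (‖v‖ ^ 2) ^ 2 = 0 :=
      le_antisymm (by simpa [discrim] using discrim_le_zero hline) (by positivity)
    simpa using hdisc
  · rintro rfl g
    have := hJ (g - f)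
    rw [add_sub_cancel, inner_zero_left] at this
    linarith [hq_nonneg (g - f)]

end QuadraticExpansion

section RegularizedLeastSquares

variable {E ι : Type*} [NormedAddCommGroup E] [InnerProductSpace ℝ E] [Fintype ι]

theorem sum_sq_sub_inner_add (a : ι → E) (y : ι → ℝ) (f h : E) :
    ∑ i, (y i - ⟪f + h, a i⟫_ℝ) ^ 2 =
      ∑ i, (y i - ⟪f, a i⟫_ℝ) ^ 2 - 2 * ⟪∑ i, (y i - ⟪f, a i⟫_ℝ) • a i, h⟫_ℝ
        + ∑ i, ⟪h, a i⟫_ℝ ^ 2 := by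
  have hterm : ∀ i, (y i - ⟪f + h, a i⟫_ℝ) ^ 2 =
      (y i - ⟪f, a i⟫_ℝ) ^ 2 - 2 * ((y i - ⟪f, a i⟫_ℝ) * ⟪h, a i⟫_ℝ) + ⟪h, a i⟫_ℝ ^ 2 := by
    intro i
    rw [inner_add_left]
    ring
  simp only [hterm, Finset.sum_add_distrib, Finset.sum_sub_distrib, ← Finset.mul_sum, sum_inner,
    real_inner_smul_left, real_inner_comm (a _) h]

theorem regularizedRisk_add (c lam : ℝ) (a : ι → E) (y : ι → ℝ) (f h : E) :
    c * ∑ i, (y i - ⟪f + h, a i⟫_ℝ) ^ 2 + lam * ‖f + h‖ ^ 2 =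
      (c * ∑ i, (y i - ⟪f, a i⟫_ℝ) ^ 2 + lam * ‖f‖ ^ 2)
        + ⟪(2 : ℝ) • (lam • f - c • ∑ i, (y i - ⟪f, a i⟫_ℝ) • a i), h⟫_ℝ
        + (c * ∑ i, ⟪h, a i⟫_ℝ ^ 2 + lam * ‖h‖ ^ 2) := by
  rw [sum_sq_sub_inner_add, norm_add_sq_real, real_inner_smul_left, inner_sub_left,
    real_inner_smul_left, real_inner_smul_left]
  ring

end RegularizedLeastSquares

theorem minimizer_iff_normal_equation_general
    {H X : Type*} [NormedAddCommGroup H] [InnerProductSpace ℝ H]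
    {M : ℕ} (hM : 0 < M) (x : Fin M → X) (φ : X → H) (y : Fin M → ℝ)
    (lam : ℝ) (hlam : 0 < lam)
    (J : H → ℝ)
    (hJ : ∀ f : H, J f =
      (1 / (M : ℝ)) * ∑ i, (y i - inner ℝ f (φ (x i))) ^ 2 + lam * ‖f‖ ^ 2)
    (f : H) :
    (∀ g : H, J f ≤ J g) ↔
      ((M : ℝ) * lam) • f = ∑ i, (y i - (inner ℝ f (φ (x i)) : ℝ)) • φ (x i) := by
  have hM' : (M : ℝ) ≠ 0 := Nat.cast_ne_zero.mpr hM.ne'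
  rw [forall_le_iff_eq_zero_of_map_add_eq
    (q := fun h => 1 / (M : ℝ) * ∑ i, ⟪h, φ (x i)⟫_ℝ ^ 2 + lam * ‖h‖ ^ 2)
    (fun h => by positivity)
    (fun t h => by simp only [real_inner_smul_left, norm_smul, Real.norm_eq_abs, mul_pow, sq_abs,
      ← Finset.mul_sum]; ring)
    (fun h => by simp only [hJ]; exact regularizedRisk_add _ _ _ _ f h)]
  set S := ∑ i, (y i - ⟪f, φ (x i)⟫_ℝ) • φ (x i)
  have hscale : ((M : ℝ) * lam) • f - S = (M : ℝ) • (lam • f - (1 / (M : ℝ)) • S) := by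
    rw [smul_sub, smul_smul, smul_smul, mul_one_div_cancel hM', one_smul]
  rw [← sub_eq_zero (a := ((M : ℝ) * lam) • f), hscale, smul_eq_zero_iff_right hM',
    smul_eq_zero_iff_right two_ne_zero]

/-- `f` minimizes the regularized empirical risk
`J(f) = (1/M) ∑ᵢ (yᵢ - ⟪f, φ(xᵢ)⟫)² + λ‖f‖²` over `H` if and only if it satisfies the
normal equation `Mλ·f = ∑ᵢ (yᵢ - ⟪f, φ(xᵢ)⟫)·φ(xᵢ)`. -/
theorem minimizer_iff_normal_equation
    {H X : Type*} [NormedAddCommGroup H] [InnerProductSpace ℝ H] [CompleteSpace H]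
    {M : ℕ} (hM : 0 < M) (x : Fin M → X) (φ : X → H) (y : Fin M → ℝ)
    (lam : ℝ) (hlam : 0 < lam)
    (J : H → ℝ)
    (hJ : ∀ f : H, J f =
      (1 / (M : ℝ)) * ∑ i, (y i - inner ℝ f (φ (x i))) ^ 2 + lam * ‖f‖ ^ 2)
    (f : H) :
    (∀ g : H, J f ≤ J g) ↔
      ((M : ℝ) * lam) • f = ∑ i, (y i - (inner ℝ f (φ (x i)) : ℝ)) • φ (x i) :=
  minimizer_iff_normal_equation_general hM x φ y lam hlam J hJ f
end

section
/- Let X be a nonempty set and K : X × X → ℝ a symmetric positive semidefinite kernel, i.e., K(x,x') = K(x',x) for all x, x' ∈ X and for every finite family x₁, …, x_m ∈ X and every c ∈ ℝ^m one has ∑_{i,j} c_i c_j K(x_i, x_j) ≥ 0. Then there exists a real Hilbert space H and a map φ : X → H such that K(x,x') = ⟪φ x, φ x'⟫ for all x, x' ∈ X. -/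
/-!
The quadratic form `c ↦ ∑ c_i c_j K(x_i, x_j)` makes the finitely supported functions on `X` a
pre-Hilbert space; its completion (after identifying vectors at distance zero) is `H`, and `φ x`
is the class of the indicator of `x`. Mathlib performs this Moore construction as `RKHS.OfKernel`
for kernels with values in `V →L[𝕜] V`, so we view `K` as a kernel with values in `ℝ →L[ℝ] ℝ`.
-/

universe u

variable {X : Type u}

theorem sum_sum_mul_kernel_nonneg (K : X → X → ℝ)
    (hpsd : ∀ (m : ℕ) (x : Fin m → X) (c : Fin m → ℝ),
      0 ≤ ∑ i, ∑ j, c i * c j * K (x i) (x j))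
    {ι : Type*} [Fintype ι] (x : ι → X) (c : ι → ℝ) :
    0 ≤ ∑ i, ∑ j, c i * c j * K (x i) (x j) := by
  let e := Fintype.equivFin ι
  refine (hpsd _ (x ∘ e.symm) (c ∘ e.symm)).trans_eq ?_
  exact Fintype.sum_equiv e.symm _ _ fun i ↦ Fintype.sum_equiv e.symm _ _ fun j ↦ rfl

theorem finsupp_sum_sum_mul_kernel_nonneg (K : X → X → ℝ)
    (hpsd : ∀ (m : ℕ) (x : Fin m → X) (c : Fin m → ℝ),
      0 ≤ ∑ i, ∑ j, c i * c j * K (x i) (x j))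
    (c : X →₀ ℝ) :
    0 ≤ c.sum fun x a ↦ c.sum fun y b ↦ a * b * K x y := by
  refine (sum_sum_mul_kernel_nonneg K hpsd ((↑) : c.support → X) (c ∘ (↑))).trans_eq ?_
  symm
  rw [Finsupp.sum, ← Finset.sum_coe_sort c.support]
  refine Finset.sum_congr rfl fun x _ ↦ ?_
  rw [Finsupp.sum, ← Finset.sum_coe_sort c.support]
  rfl

noncomputable def scalarKernelMatrix (K : X → X → ℝ) : Matrix X X (ℝ →L[ℝ] ℝ) :=
  Matrix.of fun x y ↦ K x y • 1

@[simp]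
theorem scalarKernelMatrix_apply (K : X → X → ℝ) (x y : X) (v : ℝ) :
    scalarKernelMatrix K x y v = K x y * v := rfl

theorem posSemidef_scalarKernelMatrix (K : X → X → ℝ) (hsymm : ∀ x x', K x x' = K x' x)
    (hpsd : ∀ (m : ℕ) (x : Fin m → X) (c : Fin m → ℝ),
      0 ≤ ∑ i, ∑ j, c i * c j * K (x i) (x j)) :
    (scalarKernelMatrix K).PosSemidef := by
  refine ((RKHS.posSemidef_tfae (K := scalarKernelMatrix K)).out 0 2).mpr ?_
  refine ⟨?_, fun c ↦ ?_⟩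
  · ext1 x y
    simp [scalarKernelMatrix, hsymm x y]
  · rw [Finsupp.sum_comm]
    refine (finsupp_sum_sum_mul_kernel_nonneg K hpsd c).trans_eq ?_
    simp only [scalarKernelMatrix_apply, RCLike.inner_apply', conj_trivial, RCLike.re_to_real]
    exact Finsupp.sum_congr fun x _ ↦ Finsupp.sum_congr fun y _ ↦ by ring

theorem exists_feature_map_of_psd_kernel_general
    {X : Type u} (K : X → X → ℝ)
    (hsymm : ∀ x x', K x x' = K x' x)
    (hpsd : ∀ (m : ℕ) (x : Fin m → X) (c : Fin m → ℝ),
      0 ≤ ∑ i, ∑ j, c i * c j * K (x i) (x j)) :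
    ∃ (H : Type u) (i₁ : NormedAddCommGroup H) (i₂ : @InnerProductSpace ℝ H _ i₁.toSeminormedAddCommGroup)
      (_ : @CompleteSpace H i₁.toUniformSpace) (φ : X → H),
      ∀ x x', K x x' = @inner ℝ H (@InnerProductSpace.toInner ℝ H _ i₁.toSeminormedAddCommGroup i₂) (φ x) (φ x') := by
  have : Fact (scalarKernelMatrix K).PosSemidef := ⟨posSemidef_scalarKernelMatrix K hsymm hpsd⟩
  let H := RKHS.OfKernel (scalarKernelMatrix K)
  refine ⟨H, inferInstance, inferInstance, inferInstance, fun x ↦ RKHS.kerFun H x 1, fun x x' ↦ ?_⟩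
  rw [← RKHS.kernel_inner, RKHS.OfKernel.kernel_ofKernel, scalarKernelMatrix_apply,
    RCLike.inner_apply', conj_trivial, mul_one, mul_one, hsymm]

/-- Moore–Aronszajn: every symmetric positive semidefinite kernel `K : X × X → ℝ` is
the inner-product kernel of some feature map `φ : X → H` into a real Hilbert space. -/
theorem exists_feature_map_of_psd_kernel
    {X : Type u} [Nonempty X] (K : X → X → ℝ)
    (hsymm : ∀ x x', K x x' = K x' x)
    (hpsd : ∀ (m : ℕ) (x : Fin m → X) (c : Fin m → ℝ),
      0 ≤ ∑ i, ∑ j, c i * c j * K (x i) (x j)) :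
    ∃ (H : Type u) (i₁ : NormedAddCommGroup H) (i₂ : @InnerProductSpace ℝ H _ i₁.toSeminormedAddCommGroup)
      (_ : @CompleteSpace H i₁.toUniformSpace) (φ : X → H),
      ∀ x x', K x x' = @inner ℝ H (@InnerProductSpace.toInner ℝ H _ i₁.toSeminormedAddCommGroup i₂) (φ x) (φ x') :=
  exists_feature_map_of_psd_kernel_general K hsymm hpsd
end

section
/- Let σ > 0 and n ≥ 1. The Abel kernel K(x,x') = exp(−‖x − x'‖₂ / σ) on ℝⁿ is positive semidefinite: for every finite family x₁, …, x_m ∈ ℝⁿ and every c ∈ ℝ^m, ∑_{i,j} c_i c_j exp(−‖x_i − x_j‖₂ / σ) ≥ 0. -/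
/-!
Gaussian kernels `exp (-t ‖x - y‖²) = e^{-t‖x‖²} e^{-t‖y‖²} exp (2t ⟪x, y⟫)` are positive
semidefinite: `exp` is a power series with nonnegative coefficients, and entrywise powers of the
Gram matrix are positive semidefinite by the Schur product theorem. The representation
`√s = c ∫₀^∞ (1 - e^{-ts}) t^{-3/2} dt` writes `‖x‖ + ‖y‖ - ‖x - y‖` as a positive mixture of the
kernels `1 - e^{-t‖x‖²} - e^{-t‖y‖²} + e^{-t‖x - y‖²}`, which are Gaussian kernels compressed to
the hyperplane `∑ cᵢ = 0` after adjoining the point `0`; hence that matrix is positive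
semidefinite too. Schoenberg's argument concludes: if `aᵢ + aⱼ - ψᵢⱼ` is positive semidefinite, so
is `exp (-ψᵢⱼ) = e^{-aᵢ} e^{-aⱼ} exp (aᵢ + aⱼ - ψᵢⱼ)`, applied to `ψᵢⱼ = ‖xᵢ - xⱼ‖ / σ`.
-/

open Matrix MeasureTheory Set Real

namespace Matrix

variable {ι : Type*} [Fintype ι]

lemma posSemidef_iff_sum_mul_nonneg {M : Matrix ι ι ℝ} :
    M.PosSemidef ↔ M.IsHermitian ∧ ∀ c : ι → ℝ, 0 ≤ ∑ i, ∑ j, c i * c j * M i j := by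
  simp only [posSemidef_iff_dotProduct_mulVec, dotProduct, mulVec, Finset.mul_sum, star_trivial]
  simp only [mul_comm, mul_left_comm]

lemma PosSemidef.map_pow {A : Matrix ι ι ℝ} (hA : A.PosSemidef) (k : ℕ) :
    (A.map (· ^ k)).PosSemidef := by
  induction k with
  | zero =>
    convert posSemidef_vecMulVec_self_star (1 : ι → ℝ) using 1
    ext; simp [vecMulVec]
  | succ k ih =>
    rw [show A.map (· ^ (k + 1)) = A.map (· ^ k) ⊙ A by ext; simp [pow_succ]]
    exact ih.hadamard hA

lemma PosSemidef.map_exp {A : Matrix ι ι ℝ} (hA : A.PosSemidef) : (A.map exp).PosSemidef := by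
  refine posSemidef_iff_sum_mul_nonneg.2 ⟨hA.isHermitian.map _ fun _ => rfl, fun c => ?_⟩
  have hseries : HasSum (fun k : ℕ => (∑ i, ∑ j, c i * c j * A i j ^ k) / k.factorial)
      (∑ i, ∑ j, c i * c j * exp (A i j)) := by
    simp only [Finset.sum_div, mul_div_assoc]
    refine hasSum_sum fun i _ => hasSum_sum fun j _ => ((?_ : HasSum _ _).mul_left (c i * c j))
    exact exp_eq_exp_ℝ ▸ NormedSpace.expSeries_div_hasSum_exp (A i j)
  exact hseries.nonneg fun k =>
    div_nonneg ((posSemidef_iff_sum_mul_nonneg.1 (hA.map_pow k)).2 c) (Nat.cast_nonneg _)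

theorem posSemidef_exp_neg_of_posSemidef_add_sub (a : ι → ℝ) {ψ : ι → ι → ℝ}
    (h : (of fun i j => a i + a j - ψ i j).PosSemidef) :
    (of fun i j => exp (-ψ i j)).PosSemidef := by
  classical
  have hfactor : of (fun i j => exp (-ψ i j)) = diagonal (fun i => exp (-a i)) *
      (of fun i j => a i + a j - ψ i j).map exp * (diagonal fun i => exp (-a i))ᴴ := by
    ext i j
    simp only [of_apply, diagonal_conjTranspose, diagonal_mul, mul_diagonal, map_apply,
      star_trivial, ← exp_add]
    ring_nf
  rw [hfactor]
  exact h.map_exp.mul_mul_conjTranspose_same _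

lemma PosSemidef.centered {G : Matrix (Option ι) (Option ι) ℝ} (hG : G.PosSemidef) :
    (of fun i j =>
      G (some i) (some j) - G (some i) none - G none (some j) + G none none).PosSemidef := by
  classical
  -- column `j` of `B` is `e (some j) - e none`
  let B : Matrix (Option ι) ι ℝ := of fun a j => a.elim (-1) fun i => if i = j then 1 else 0
  convert hG.conjTranspose_mul_mul_same B using 1
  ext i j
  simp only [B, of_apply, conjTranspose_eq_transpose_of_trivial, mul_apply, transpose_apply,
    Fintype.sum_option, Option.elim_none, Option.elim_some, neg_mul, one_mul, ite_mul, zero_mul,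
    Finset.sum_ite_eq', Finset.mem_univ, ↓reduceIte, mul_neg, mul_one, neg_add_rev, neg_neg,
    mul_ite, mul_zero]
  ring

lemma posSemidef_integral {α : Type*} [MeasurableSpace α] {μ : Measure α}
    {M : α → Matrix ι ι ℝ} (hM : ∀ᵐ t ∂μ, (M t).PosSemidef)
    (hint : ∀ i j, Integrable (fun t => M t i j) μ) :
    (of fun i j => ∫ t, M t i j ∂μ).PosSemidef := by
  refine posSemidef_iff_sum_mul_nonneg.2 ⟨?_, fun c => ?_⟩
  · ext i j
    refine integral_congr_ae (hM.mono fun t ht => ?_)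
    exact congrFun (congrFun ht.isHermitian i) j
  · have hswap : ∑ i, ∑ j, c i * c j * of (fun i j => ∫ t, M t i j ∂μ) i j
        = ∫ t, ∑ i, ∑ j, c i * c j * M t i j ∂μ := by
      rw [integral_finsetSum _ fun i _ => integrable_finsetSum _ fun j _ => (hint i j).const_mul _]
      simp_rw [integral_finsetSum _ fun j _ => (hint _ j).const_mul _, integral_const_mul, of_apply]
    rw [hswap]
    exact integral_nonneg_of_ae (hM.mono fun t ht => (posSemidef_iff_sum_mul_nonneg.1 ht).2 c)

end Matrix

variable {ι : Type*} [Fintype ι]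

theorem posSemidef_exp_neg_mul_norm_sub_sq {E : Type*} [SeminormedAddCommGroup E]
    [InnerProductSpace ℝ E] {t : ℝ} (ht : 0 ≤ t) (x : ι → E) :
    (of fun i j => exp (-(t * ‖x i - x j‖ ^ 2))).PosSemidef := by
  refine posSemidef_exp_neg_of_posSemidef_add_sub (fun i => t * ‖x i‖ ^ 2) ?_
  have hgram : of (fun i j => t * ‖x i‖ ^ 2 + t * ‖x j‖ ^ 2 - t * ‖x i - x j‖ ^ 2)
      = (2 * t) • gram ℝ x := by
    ext i j
    simp only [of_apply, Matrix.smul_apply, gram_apply, norm_sub_sq_real, smul_eq_mul]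
    ring
  rw [hgram]
  exact (posSemidef_gram ℝ x).smul (mul_nonneg zero_le_two ht)

noncomputable def sqrtIntegrand (s t : ℝ) : ℝ := (1 - exp (-(t * s))) * t ^ (-(3 / 2) : ℝ)

-- equals `2 √(π s)`
noncomputable def sqrtIntegral (s : ℝ) : ℝ := ∫ t in Ioi 0, sqrtIntegrand s t

lemma continuousOn_sqrtIntegrand (s : ℝ) : ContinuousOn (sqrtIntegrand s) (Ioi 0) :=
  (continuous_const.sub (continuous_id.mul continuous_const).neg.rexp).continuousOn.mul
    (continuousOn_id.rpow_const fun _ ht => Or.inl (ne_of_gt ht))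

lemma integrableOn_sqrtIntegrand {s : ℝ} (hs : 0 ≤ s) :
    IntegrableOn (sqrtIntegrand s) (Ioi 0) := by
  have hbound : ∀ t ∈ Ioi (0 : ℝ),
      ‖sqrtIntegrand s t‖ = (1 - exp (-(t * s))) * t ^ (-(3 / 2) : ℝ) ∧
        1 - exp (-(t * s)) ≤ t * s ∧ 1 - exp (-(t * s)) ≤ 1 := by
    intro t ht
    have hts : 0 ≤ t * s := mul_nonneg (le_of_lt ht) hs
    refine ⟨Real.norm_of_nonneg (mul_nonneg ?_ (rpow_nonneg (le_of_lt ht) _)), ?_, ?_⟩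
    · linarith [exp_le_one_iff.2 (neg_nonpos.2 hts)]
    · linarith [add_one_le_exp (-(t * s))]
    · linarith [exp_pos (-(t * s))]
  rw [← Ioc_union_Ioi_eq_Ioi zero_le_one]
  refine IntegrableOn.union ?_ ?_
  · have hdom : IntegrableOn (fun t : ℝ => s * t ^ (-(1 / 2) : ℝ)) (Ioc 0 1) := by
      refine Integrable.const_mul
        (?_ : IntegrableOn (fun t : ℝ => t ^ (-(1 / 2) : ℝ)) (Ioc 0 1)) s
      rw [← intervalIntegrable_iff_integrableOn_Ioc_of_le zero_le_one]
      exact intervalIntegral.intervalIntegrable_rpow' (by norm_num)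
    refine hdom.mono' ((continuousOn_sqrtIntegrand s).mono Ioc_subset_Ioi_self
      |>.aestronglyMeasurable measurableSet_Ioc) ((ae_restrict_iff' measurableSet_Ioc).2 ?_)
    refine Filter.Eventually.of_forall fun t ht => ?_
    obtain ⟨hnorm, hlin, -⟩ := hbound t ht.1
    rw [hnorm]
    calc (1 - exp (-(t * s))) * t ^ (-(3 / 2) : ℝ)
        ≤ t * s * t ^ (-(3 / 2) : ℝ) := by have := rpow_nonneg ht.1.le (-(3 / 2)); gcongr
      _ = s * t ^ (-(1 / 2) : ℝ) := by
        rw [show (-(1 / 2) : ℝ) = 1 + -(3 / 2) by norm_num, rpow_add ht.1, rpow_one]; ring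
  · have hdom : IntegrableOn (fun t : ℝ => t ^ (-(3 / 2) : ℝ)) (Ioi 1) :=
      integrableOn_Ioi_rpow_of_lt (by norm_num) one_pos
    refine hdom.mono' ((continuousOn_sqrtIntegrand s).mono (Ioi_subset_Ioi zero_le_one)
      |>.aestronglyMeasurable measurableSet_Ioi) ((ae_restrict_iff' measurableSet_Ioi).2 ?_)
    refine Filter.Eventually.of_forall fun t ht => ?_
    have ht0 : (0 : ℝ) < t := zero_lt_one.trans ht
    obtain ⟨hnorm, -, hone⟩ := hbound t ht0
    rw [hnorm]
    exact mul_le_of_le_one_left (rpow_nonneg ht0.le _) hone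

lemma sqrtIntegrand_eq_mul {s t : ℝ} (hs : 0 < s) (ht : 0 < t) :
    sqrtIntegrand s t = s ^ (3 / 2 : ℝ) * sqrtIntegrand 1 (s * t) := by
  have hcancel : s ^ (3 / 2 : ℝ) * s ^ (-(3 / 2) : ℝ) = 1 := by
    rw [← rpow_add hs]; norm_num
  simp only [sqrtIntegrand, mul_rpow hs.le ht.le, mul_one]
  rw [mul_comm s t]
  linear_combination (1 - exp (-(t * s))) * t ^ (-(3 / 2) : ℝ) * hcancel.symm

lemma sqrtIntegral_eq_sqrt_mul {s : ℝ} (hs : 0 ≤ s) : sqrtIntegral s = √s * sqrtIntegral 1 := by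
  rcases hs.eq_or_lt with rfl | hs
  · simp [sqrtIntegral, sqrtIntegrand]
  have hpow : s ^ (3 / 2 : ℝ) * s⁻¹ = √s := by
    rw [sqrt_eq_rpow, ← rpow_neg_one, ← rpow_add hs]; norm_num
  calc sqrtIntegral s = s ^ (3 / 2 : ℝ) * ∫ t in Ioi 0, sqrtIntegrand 1 (s * t) := by
        rw [sqrtIntegral, ← integral_const_mul]
        exact setIntegral_congr_fun measurableSet_Ioi fun t ht => sqrtIntegrand_eq_mul hs ht
    _ = √s * sqrtIntegral 1 := by
        rw [integral_comp_mul_left_Ioi _ _ hs, mul_zero, smul_eq_mul, ← mul_assoc, hpow,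
          sqrtIntegral]

lemma sqrtIntegral_one_pos : 0 < sqrtIntegral 1 := by
  have hpos : ∀ t ∈ Ioi (0 : ℝ), 0 < sqrtIntegrand 1 t := fun t ht =>
    mul_pos (sub_pos.2 (exp_lt_one_iff.2 (by simpa using ht))) (rpow_pos_of_pos ht _)
  rw [sqrtIntegral, setIntegral_pos_iff_support_of_nonneg_ae
    ((ae_restrict_iff' measurableSet_Ioi).2 (.of_forall fun t ht => (hpos t ht).le))
    (integrableOn_sqrtIntegrand zero_le_one)]
  rw [inter_eq_right.2 fun t ht => Function.mem_support.2 (hpos t ht).ne', volume_Ioi]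
  exact WithTop.top_pos

lemma norm_eq_sqrtIntegral {E : Type*} [SeminormedAddGroup E] (z : E) :
    ‖z‖ = (sqrtIntegral 1)⁻¹ * sqrtIntegral (‖z‖ ^ 2) := by
  rw [sqrtIntegral_eq_sqrt_mul (sq_nonneg _), sqrt_sq (norm_nonneg _),
    mul_comm, mul_inv_cancel_right₀ sqrtIntegral_one_pos.ne']

theorem posSemidef_norm_add_norm_sub_norm {E : Type*} [SeminormedAddCommGroup E]
    [InnerProductSpace ℝ E] (x : ι → E) :
    (of fun i j => ‖x i‖ + ‖x j‖ - ‖x i - x j‖).PosSemidef := by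
  have hI := fun s : ℝ => integrableOn_sqrtIntegrand (sq_nonneg s)
  let N : ℝ → Matrix ι ι ℝ := fun t => of fun i j =>
    sqrtIntegrand (‖x i‖ ^ 2) t + sqrtIntegrand (‖x j‖ ^ 2) t - sqrtIntegrand (‖x i - x j‖ ^ 2) t
  have hN : ∀ t ∈ Ioi (0 : ℝ), (N t).PosSemidef := by
    intro t ht
    have hgauss := (posSemidef_exp_neg_mul_norm_sub_sq (le_of_lt ht)
      (fun a : Option ι => a.elim 0 x)).centered.smul (rpow_nonneg (le_of_lt ht) (-(3 / 2) : ℝ))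
    convert hgauss using 1
    ext i j
    simp only [N, sqrtIntegrand, of_apply, Matrix.smul_apply, smul_eq_mul, Option.elim_some,
      Option.elim_none, sub_zero, zero_sub, norm_neg, sub_self, norm_zero, ne_eq,
      OfNat.ofNat_ne_zero, not_false_eq_true, zero_pow, mul_zero, neg_zero, exp_zero]
    ring
  have hint : ∀ i j, IntegrableOn (fun t => N t i j) (Ioi 0) := fun i j =>
    ((hI _).add (hI _)).sub (hI _)
  have hmatrix : of (fun i j => ‖x i‖ + ‖x j‖ - ‖x i - x j‖)
      = (sqrtIntegral 1)⁻¹ • of fun i j => ∫ t in Ioi 0, N t i j := by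
    ext i j
    simp only [of_apply, N, Matrix.smul_apply, smul_eq_mul]
    have hsum : IntegrableOn (fun t => sqrtIntegrand (‖x i‖ ^ 2) t + sqrtIntegrand (‖x j‖ ^ 2) t)
        (Ioi 0) := (hI _).add (hI _)
    rw [integral_sub hsum (hI _), integral_add (hI _) (hI _)]
    simp only [← sqrtIntegral.eq_1, mul_sub, mul_add, ← norm_eq_sqrtIntegral]
  rw [hmatrix]
  exact (posSemidef_integral ((ae_restrict_iff' measurableSet_Ioi).2
    (Filter.Eventually.of_forall hN)) hint).smul (inv_nonneg.2 sqrtIntegral_one_pos.le)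

theorem abel_kernel_posSemidef_general
    {n : ℕ} (σ : ℝ) (hσ : 0 < σ)
    {m : ℕ} (x : Fin m → EuclideanSpace ℝ (Fin n)) (c : Fin m → ℝ) :
    0 ≤ ∑ i, ∑ j, c i * c j * Real.exp (-‖x i - x j‖ / σ) := by
  have hpointed : (of fun i j => ‖x i‖ / σ + ‖x j‖ / σ - ‖x i - x j‖ / σ).PosSemidef := by
    convert (posSemidef_norm_add_norm_sub_norm x).smul (inv_nonneg.2 hσ.le) using 1
    ext i j
    simp only [of_apply, Matrix.smul_apply, smul_eq_mul]
    ring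
  have hkernel := posSemidef_exp_neg_of_posSemidef_add_sub _ hpointed
  simpa only [of_apply, neg_div] using (posSemidef_iff_sum_mul_nonneg.1 hkernel).2 c

/-- The Abel kernel `K(x,x') = exp(-‖x - x'‖₂/σ)` on `ℝⁿ` is positive semidefinite. -/
theorem abel_kernel_posSemidef
    {n : ℕ} (hn : 1 ≤ n) (σ : ℝ) (hσ : 0 < σ)
    {m : ℕ} (x : Fin m → EuclideanSpace ℝ (Fin n)) (c : Fin m → ℝ) :
    0 ≤ ∑ i, ∑ j, c i * c j * Real.exp (-‖x i - x j‖ / σ) :=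
  abel_kernel_posSemidef_general σ hσ x c
end
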